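/- Let P, Q be probability measures on ℝ with quantile functions F_P^←, F_Q^←. Then inf over all couplings π of P and Q of ∫ |u−v| dπ(u,v) equals ∫₀¹ |F_P^←(x) − F_Q^←(x)| dx. -/

import Mathlib

/-!
For any coupling `π`, Tonelli's theorem applied to `|u - v| = λ{t : t separates u and v}` gives
`∫ |u - v| dπ = ∫ π{(u, v) : t separates u and v} dt`, and the `π`-measure of that symmetric
difference of two marginal events is at least `|F_P(t) - F_Q(t)|`. The quantile coupling, the image
of Lebesgue measure on `(0,1)` under `x ↦ (F_P^←(x), F_Q^←(x))`, has marginals `P` and `Q` because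
`F^←(x) ≤ t ↔ x ≤ F(t)`, and by the same equivalence it attains `|F_P(t) - F_Q(t)|` for every `t`.
-/

open MeasureTheory Set ENNReal

/-- Cumulative distribution function of a measure on `ℝ`. -/
noncomputable def cdf (P : Measure ℝ) (z : ℝ) : ℝ := (P (Iic z)).toReal

/-- Quantile function (generalized inverse of the cdf). -/
noncomputable def quantile (P : Measure ℝ) (x : ℝ) : ℝ := sInf {z : ℝ | x ≤ cdf P z}

open scoped symmDiff

theorem Set.Iic_symmDiff_Iic {α : Type*} [LinearOrder α] (a b : α) :
    Iic a ∆ Iic b = Ioc (min a b) (max a b) := by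
  ext x
  simp only [mem_symmDiff, mem_Iic, mem_Ioc, min_lt_iff, le_max_iff]
  grind

theorem Set.Ici_symmDiff_Ici {α : Type*} [LinearOrder α] (a b : α) :
    Ici a ∆ Ici b = Ico (min a b) (max a b) := by
  ext x
  simp only [mem_symmDiff, mem_Ici, mem_Ico, min_le_iff, lt_max_iff]
  grind

theorem Real.volume_Ici_symmDiff_Ici (a b : ℝ) :
    volume (Ici a ∆ Ici b) = ENNReal.ofReal |a - b| := by
  rw [Ici_symmDiff_Ici, Real.volume_Ico, max_sub_min_eq_abs, abs_sub_comm]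

theorem lintegral_ofReal_abs_sub_eq {α : Type*} [MeasurableSpace α] (μ : Measure α) [SFinite μ]
    {f g : α → ℝ} (hf : Measurable f) (hg : Measurable g) :
    ∫⁻ a, ENNReal.ofReal |f a - g a| ∂μ = ∫⁻ t, μ ((f ⁻¹' Iic t) ∆ (g ⁻¹' Iic t)) := by
  set E : Set (α × ℝ) := {q | f q.1 ≤ q.2} ∆ {q | g q.1 ≤ q.2}
  have hE : MeasurableSet E :=
    (measurableSet_le (hf.comp measurable_fst) measurable_snd).symmDiff
      (measurableSet_le (hg.comp measurable_fst) measurable_snd)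
  calc ∫⁻ a, ENNReal.ofReal |f a - g a| ∂μ
      = ∫⁻ a, volume (Prod.mk a ⁻¹' E) ∂μ := by
        simp_rw [← Real.volume_Ici_symmDiff_Ici]; rfl
    _ = μ.prod volume E := (Measure.prod_apply hE).symm
    _ = ∫⁻ t, μ ((f ⁻¹' Iic t) ∆ (g ⁻¹' Iic t)) := Measure.prod_apply_symm hE

theorem StieltjesFunction.csInf_le_iff (F : StieltjesFunction ℝ) {x : ℝ}
    (hbot : ∃ w, F w < x) (htop : ∃ z, x ≤ F z) (z : ℝ) :
    sInf {z | x ≤ F z} ≤ z ↔ x ≤ F z := by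
  obtain ⟨w, hw⟩ := hbot
  have hbdd : BddBelow {z | x ≤ F z} :=
    ⟨w, fun s hs => (F.mono.reflect_lt (hw.trans_le hs)).le⟩
  -- the infimum belongs to the set by right-continuity
  have hmem : x ≤ F (sInf {z | x ≤ F z}) := by
    refine ge_of_tendsto ((F.right_continuous _).mono Ioi_subset_Ici_self) ?_
    filter_upwards [self_mem_nhdsWithin] with t ht
    obtain ⟨s, hs, hst⟩ := exists_lt_of_csInf_lt htop ht
    exact le_trans hs (F.mono hst.le)
  exact ⟨fun h => hmem.trans (F.mono h), fun h => csInf_le hbdd h⟩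

instance : IsProbabilityMeasure (volume.restrict (Ioo (0 : ℝ) 1)) :=
  ⟨by rw [Measure.restrict_apply_univ, Real.volume_Ioo, sub_zero, ofReal_one]⟩

theorem restrict_Ioo_zero_one_Iic {c : ℝ} (hc : c ∈ Icc (0 : ℝ) 1) :
    volume.restrict (Ioo 0 1) (Iic c) = ENNReal.ofReal c := by
  rw [Measure.restrict_congr_set Ioo_ae_eq_Icc, Measure.restrict_apply' measurableSet_Icc]
  have : Iic c ∩ Icc 0 1 = Icc 0 c := by
    ext x; simp only [mem_inter_iff, mem_Iic, mem_Icc]; grind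
  rw [this, Real.volume_Icc, sub_zero]

theorem restrict_Ioo_zero_one_Ioc {a b : ℝ} (ha : 0 ≤ a) (hb : b ≤ 1) :
    volume.restrict (Ioo 0 1) (Ioc a b) = ENNReal.ofReal (b - a) := by
  rw [Measure.restrict_congr_set Ioo_ae_eq_Icc, Measure.restrict_apply' measurableSet_Icc,
    inter_eq_left.2 (Ioc_subset_Icc_self.trans (Icc_subset_Icc ha hb)), Real.volume_Ioc]

section Quantile

variable (P : Measure ℝ) [IsProbabilityMeasure P]

theorem cdf_eq_probabilityTheory_cdf : cdf P = ProbabilityTheory.cdf P :=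
  funext fun z => (ProbabilityTheory.cdf_eq_real P z).symm

theorem quantile_le_iff {x : ℝ} (hx : x ∈ Ioo (0 : ℝ) 1) (z : ℝ) :
    quantile P x ≤ z ↔ x ≤ cdf P z := by
  rw [quantile, cdf_eq_probabilityTheory_cdf]
  refine (ProbabilityTheory.cdf P).csInf_le_iff ?_ ?_ z
  · exact ((ProbabilityTheory.tendsto_cdf_atBot P).eventually (eventually_lt_nhds hx.1)).exists
  · exact ((ProbabilityTheory.tendsto_cdf_atTop P).eventually (eventually_ge_nhds hx.2)).exists

theorem monotoneOn_quantile : MonotoneOn (quantile P) (Ioo 0 1) := fun _ hx _ hy hxy =>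
  (quantile_le_iff P hx _).2 <| hxy.trans <| (quantile_le_iff P hy _).1 le_rfl

theorem aemeasurable_quantile : AEMeasurable (quantile P) (volume.restrict (Ioo 0 1)) :=
  aemeasurable_restrict_of_monotoneOn measurableSet_Ioo (monotoneOn_quantile P)

theorem preimage_quantile_Iic_inter_Ioo (z : ℝ) :
    quantile P ⁻¹' Iic z ∩ Ioo 0 1 = Iic (cdf P z) ∩ Ioo 0 1 := by
  ext x
  simp only [mem_inter_iff, mem_preimage, mem_Iic]
  exact and_congr_left (quantile_le_iff P · z)

theorem cdf_mem_Icc (z : ℝ) : cdf P z ∈ Icc 0 1 := by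
  rw [cdf_eq_probabilityTheory_cdf]
  exact ⟨ProbabilityTheory.cdf_nonneg P z, ProbabilityTheory.cdf_le_one P z⟩

theorem map_quantile : (volume.restrict (Ioo 0 1)).map (quantile P) = P := by
  have : IsProbabilityMeasure ((volume.restrict (Ioo 0 1)).map (quantile P)) :=
    Measure.isProbabilityMeasure_map (aemeasurable_quantile P)
  refine Measure.ext_of_Iic _ _ fun z => ?_
  rw [Measure.map_apply_of_aemeasurable (aemeasurable_quantile P) measurableSet_Iic,
    Measure.restrict_apply' measurableSet_Ioo, preimage_quantile_Iic_inter_Ioo,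
    ← Measure.restrict_apply' measurableSet_Ioo, restrict_Ioo_zero_one_Iic (cdf_mem_Icc P z), cdf,
    ofReal_toReal (measure_ne_top P _)]

end Quantile

noncomputable def quantileCoupling (P Q : Measure ℝ) : Measure (ℝ × ℝ) :=
  (volume.restrict (Ioo 0 1)).map fun x => (quantile P x, quantile Q x)

section QuantileCoupling

variable (P Q : Measure ℝ) [IsProbabilityMeasure P] [IsProbabilityMeasure Q]

theorem aemeasurable_quantile_prod :
    AEMeasurable (fun x => (quantile P x, quantile Q x)) (volume.restrict (Ioo 0 1)) :=
  (aemeasurable_quantile P).prodMk (aemeasurable_quantile Q)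

instance : IsProbabilityMeasure (quantileCoupling P Q) :=
  Measure.isProbabilityMeasure_map (aemeasurable_quantile_prod P Q)

theorem map_fst_quantileCoupling : (quantileCoupling P Q).map Prod.fst = P := by
  rw [quantileCoupling, AEMeasurable.map_map_of_aemeasurable measurable_fst.aemeasurable
    (aemeasurable_quantile_prod P Q)]
  exact map_quantile P

theorem map_snd_quantileCoupling : (quantileCoupling P Q).map Prod.snd = Q := by
  rw [quantileCoupling, AEMeasurable.map_map_of_aemeasurable measurable_snd.aemeasurable
    (aemeasurable_quantile_prod P Q)]
  exact map_quantile Q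

theorem lintegral_quantileCoupling :
    ∫⁻ p, ENNReal.ofReal |p.1 - p.2| ∂quantileCoupling P Q
      = ∫⁻ x in Ioo (0 : ℝ) 1, ENNReal.ofReal |quantile P x - quantile Q x| :=
  lintegral_map' (measurable_fst.sub measurable_snd).abs.ennreal_ofReal.aemeasurable
    (aemeasurable_quantile_prod P Q)

theorem quantileCoupling_symmDiff (t : ℝ) :
    quantileCoupling P Q ((Prod.fst ⁻¹' Iic t) ∆ (Prod.snd ⁻¹' Iic t))
      = ENNReal.ofReal |cdf P t - cdf Q t| := by
  rw [quantileCoupling, Measure.map_apply_of_aemeasurable (aemeasurable_quantile_prod P Q)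
    ((measurable_fst measurableSet_Iic).symmDiff (measurable_snd measurableSet_Iic))]
  change volume.restrict (Ioo 0 1) ((quantile P ⁻¹' Iic t) ∆ (quantile Q ⁻¹' Iic t)) = _
  have hP := cdf_mem_Icc P t
  have hQ := cdf_mem_Icc Q t
  rw [Measure.restrict_apply' measurableSet_Ioo, inter_symmDiff_distrib_right,
    preimage_quantile_Iic_inter_Ioo, preimage_quantile_Iic_inter_Ioo,
    ← inter_symmDiff_distrib_right, ← Measure.restrict_apply' measurableSet_Ioo, Iic_symmDiff_Iic,
    restrict_Ioo_zero_one_Ioc (le_min hP.1 hQ.1) (max_le hP.2 hQ.2), max_sub_min_eq_abs,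
    abs_sub_comm]

end QuantileCoupling

theorem ofReal_abs_cdf_sub_le_coupling {P Q : Measure ℝ} {π : Measure (ℝ × ℝ)} [IsFiniteMeasure π]
    (hP : π.map Prod.fst = P) (hQ : π.map Prod.snd = Q) (t : ℝ) :
    ENNReal.ofReal |cdf P t - cdf Q t| ≤ π ((Prod.fst ⁻¹' Iic t) ∆ (Prod.snd ⁻¹' Iic t)) := by
  have hA : MeasurableSet (Prod.fst ⁻¹' Iic t : Set (ℝ × ℝ)) := measurable_fst measurableSet_Iic
  have hB : MeasurableSet (Prod.snd ⁻¹' Iic t : Set (ℝ × ℝ)) := measurable_snd measurableSet_Iic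
  rw [cdf, cdf, ← hP, ← hQ, Measure.map_apply measurable_fst measurableSet_Iic,
    Measure.map_apply measurable_snd measurableSet_Iic, ← measureReal_def, ← measureReal_def,
    ← ofReal_measureReal]
  exact ofReal_le_ofReal
    (abs_measureReal_sub_le_measureReal_symmDiff hA.nullMeasurableSet hB.nullMeasurableSet)

/-- The infimum of `∫ |u - v| dπ` over all couplings `π` of `P` and `Q`
equals the `L¹` distance of the quantile functions on `(0,1)` (1-Wasserstein distance). -/
theorem stmt13 (P Q : Measure ℝ) [IsProbabilityMeasure P] [IsProbabilityMeasure Q] :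
    sInf { I : ℝ≥0∞ | ∃ π : Measure (ℝ × ℝ), IsProbabilityMeasure π ∧
        π.map Prod.fst = P ∧ π.map Prod.snd = Q ∧
        I = ∫⁻ p, ENNReal.ofReal |p.1 - p.2| ∂π }
      = ∫⁻ x in Ioo (0:ℝ) 1, ENNReal.ofReal |quantile P x - quantile Q x| := by
  rw [← lintegral_quantileCoupling]
  refine le_antisymm (sInf_le ⟨quantileCoupling P Q, inferInstance, map_fst_quantileCoupling P Q,
    map_snd_quantileCoupling P Q, rfl⟩) (le_sInf ?_)
  rintro _ ⟨π, hπ, hP, hQ, rfl⟩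
  calc ∫⁻ p, ENNReal.ofReal |p.1 - p.2| ∂quantileCoupling P Q
      = ∫⁻ t, ENNReal.ofReal |cdf P t - cdf Q t| := by
        rw [lintegral_ofReal_abs_sub_eq _ measurable_fst measurable_snd]
        exact lintegral_congr (quantileCoupling_symmDiff P Q)
    _ ≤ ∫⁻ t, π ((Prod.fst ⁻¹' Iic t) ∆ (Prod.snd ⁻¹' Iic t)) :=
        lintegral_mono (ofReal_abs_cdf_sub_le_coupling hP hQ)
    _ = ∫⁻ p, ENNReal.ofReal |p.1 - p.2| ∂π :=
        (lintegral_ofReal_abs_sub_eq _ measurable_fst measurable_snd).symm
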